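/- Properties of the function Ĩ_p (Claim 'Properties of the function Ĩ_p'): Fix an integer Δ ≥ 3. There exists ε₀ > 0 such that for every ε ∈ (0,ε₀) and every r ∈ R_Δ, the function Ĩ_p(x) := e^{−x} · (1 + ε · Σ_{k=1}^{Δ−2} (x^k/k!) · s_{k+2}) is strictly decreasing on [0,∞), satisfies Ĩ_p'(x) ≤ −(1/2)·e^{−x} for all x ≥ 0, and is convex on the interval [0, (1/(2εΔ))^{1/Δ}]. -/

import Mathlib

open Real MeasureTheory Filter

noncomputable section

/-- Tail sums: `s_k = Σ_{d=k}^Δ r_d` (also used as `q_k` for distributions `p`). -/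
def tailS (Δ : ℕ) (r : ℕ → ℝ) (k : ℕ) : ℝ := ∑ d ∈ Finset.Icc k Δ, r d

/-- Membership in the set `R_Δ`: `r_2 = -1`, `r_k ≥ 0` for `3 ≤ k ≤ Δ`, `r_k = 0` for `k > Δ`,
and `Σ_{k=3}^Δ r_k = 1`. -/
def memR (Δ : ℕ) (r : ℕ → ℝ) : Prop :=
  r 2 = -1 ∧ (∀ k, 3 ≤ k → k ≤ Δ → 0 ≤ r k) ∧ (∀ k, Δ < k → r k = 0) ∧
    (∑ k ∈ Finset.Icc 3 Δ, r k) = 1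

/-- The Molloy–Reed constant `Υ_r = Σ_{k=3}^Δ k(k-2) r_k`. -/
def Upsilon (Δ : ℕ) (r : ℕ → ℝ) : ℝ := ∑ k ∈ Finset.Icc 3 Δ, (k : ℝ) * ((k : ℝ) - 2) * r k

/-- `Λ_r(t) = λ'(t) · ∫_0^{λ(t)} e^x/(1+x)² · (Σ_{k=2}^{Δ-1} x^k/k! · s_{k+1}) dx`. -/
def LamErr (lam : ℝ → ℝ) (Δ : ℕ) (r : ℕ → ℝ) (t : ℝ) : ℝ :=
  deriv lam t * ∫ x in (0:ℝ)..(lam t),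
    Real.exp x / (1 + x) ^ 2 *
      ∑ k ∈ Finset.Icc 2 (Δ - 1), x ^ k / (Nat.factorial k : ℝ) * tailS Δ r (k + 1)

/-- `H_r(t) = e^{-λ(t)} (Λ_r'(t) - λ'(t)Λ_r(t) + λ'(t) Σ_{k=0}^{Δ-2} λ(t)^k/k! · r_{k+2})`. -/
def Herr (lam : ℝ → ℝ) (Δ : ℕ) (r : ℕ → ℝ) (t : ℝ) : ℝ :=
  Real.exp (-lam t) *
    (deriv (LamErr lam Δ r) t - deriv lam t * LamErr lam Δ r t +
      deriv lam t * ∑ k ∈ Finset.range (Δ - 1), lam t ^ k / (Nat.factorial k : ℝ) * r (k + 2))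

/-- `I_r(t) = e^{-λ(t)} ( -Λ_r(t) + Σ_{k=1}^{Δ-2} λ(t)^k/k! · s_{k+2})`. -/
def Ierr (lam : ℝ → ℝ) (Δ : ℕ) (r : ℕ → ℝ) (t : ℝ) : ℝ :=
  Real.exp (-lam t) *
    (-LamErr lam Δ r t +
      ∑ k ∈ Finset.Icc 1 (Δ - 2), lam t ^ k / (Nat.factorial k : ℝ) * tailS Δ r (k + 2))

/-- `u(t) = 1 + λ(t) ∫_0^t (λ'(s)-1)/λ(s)² ds`. -/
def uAux (lam : ℝ → ℝ) (t : ℝ) : ℝ :=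
  1 + lam t * ∫ s in (0:ℝ)..t, (deriv lam s - 1) / (lam s) ^ 2

/-- `α_r(t) = -∫_0^t u(s) H_r(s) λ(s) ds`. -/
def alphaAux (lam : ℝ → ℝ) (Δ : ℕ) (r : ℕ → ℝ) (t : ℝ) : ℝ :=
  -∫ s in (0:ℝ)..t, uAux lam s * Herr lam Δ r s * lam s

/-- `β_r(t) = ∫_0^t H_r(s) λ(s)² ds`. -/
def betaAux (lam : ℝ → ℝ) (Δ : ℕ) (r : ℕ → ℝ) (t : ℝ) : ℝ :=
  ∫ s in (0:ℝ)..t, Herr lam Δ r s * (lam s) ^ 2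

/-- `ω_r(t) = α_r(t) λ(t) + β_r(t) u(t)`. -/
def omegaAux (lam : ℝ → ℝ) (Δ : ℕ) (r : ℕ → ℝ) (t : ℝ) : ℝ :=
  alphaAux lam Δ r t * lam t + betaAux lam Δ r t * uAux lam t

/-- `t^-_{p,δ} = (1-δ)/(ε Υ_r)`. -/
def tMinus (Δ : ℕ) (r : ℕ → ℝ) (ε δ : ℝ) : ℝ := (1 - δ) / (ε * Upsilon Δ r)

/-- `t^+_{p,δ} = (1+δ)/(ε Υ_r)`. -/
def tPlus (Δ : ℕ) (r : ℕ → ℝ) (ε δ : ℝ) : ℝ := (1 + δ) / (ε * Upsilon Δ r)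

/-- `w^-_{p,δ}`. -/
def wMinus (lam : ℝ → ℝ) (Δ : ℕ) (r : ℕ → ℝ) (ε δ : ℝ) (t : ℝ) : ℝ :=
  if t ≤ tMinus Δ r ε δ then lam t + (1 + δ / 2) * ε * omegaAux lam Δ r t
  else lam (tMinus Δ r ε δ) + (1 + δ / 2) * ε * omegaAux lam Δ r (tMinus Δ r ε δ)

/-- `w^+_{p,δ}`. -/
def wPlus (lam : ℝ → ℝ) (Δ : ℕ) (r : ℕ → ℝ) (ε δ : ℝ) (t : ℝ) : ℝ :=
  if t ≤ tPlus Δ r ε δ then lam t + (1 - δ / 2) * ε * omegaAux lam Δ r t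
  else lam (tPlus Δ r ε δ) + (1 - δ / 2) * ε * omegaAux lam Δ r (tPlus Δ r ε δ)

/-- `Ī^-_{p,δ}(t) = e^{-λ(t)} + (1-δ) ε I_r(t)`. -/
def IbarMinus (lam : ℝ → ℝ) (Δ : ℕ) (r : ℕ → ℝ) (ε δ : ℝ) (t : ℝ) : ℝ :=
  Real.exp (-lam t) + (1 - δ) * ε * Ierr lam Δ r t

/-- `Ī^+_{p,δ}(t) = e^{-λ(t)} + (1+δ) ε I_r(t)`. -/
def IbarPlus (lam : ℝ → ℝ) (Δ : ℕ) (r : ℕ → ℝ) (ε δ : ℝ) (t : ℝ) : ℝ :=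
  Real.exp (-lam t) + (1 + δ) * ε * Ierr lam Δ r t

/-- `Ĩ_p(x) = e^{-x} (1 + ε Σ_{k=1}^{Δ-2} x^k/k! · s_{k+2})`. -/
def Itilde (Δ : ℕ) (r : ℕ → ℝ) (ε : ℝ) (x : ℝ) : ℝ :=
  Real.exp (-x) *
    (1 + ε * ∑ k ∈ Finset.Icc 1 (Δ - 2), x ^ k / (Nat.factorial k : ℝ) * tailS Δ r (k + 2))

/-! Write `Ĩ(x) = e^{-x} (1 + ε F(x))` with `F = Σ_{k<Δ-1} s_{k+2} x^k/k!` (the `k = 0` term is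
harmless since `s_2 = 0`). As `s_k - s_{k+1} = r_k`, we get `F - F' = G := Σ_{k<Δ-1} r_{k+2} x^k/k!`,
hence `Ĩ' = -e^{-x} (1 + εG)` and `Ĩ'' = e^{-x} (1 + εG - εG')`. For `x ≥ 0`, `G ≥ r_2 = -1` since
all other coefficients are nonnegative, and `G' ≤ 1 + x^Δ` since its coefficients `r_3, …, r_Δ`
are nonnegative with sum `1`. So for `ε < 1/3` we get `Ĩ' ≤ -(1 - ε) e^{-x} ≤ -e^{-x}/2`, and
`Ĩ'' ≥ e^{-x} (1 - 2ε - εx^Δ) ≥ 0` as long as `εx^Δ ≤ 1/(2Δ) ≤ 1/6`. -/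

def weightedExpSum (c : ℕ → ℝ) (n : ℕ) (x : ℝ) : ℝ :=
  ∑ k ∈ Finset.range n, x ^ k / (Nat.factorial k : ℝ) * c k

lemma hasDerivAt_pow_succ_div_factorial (k : ℕ) (x : ℝ) :
    HasDerivAt (fun y : ℝ => y ^ (k + 1) / (Nat.factorial (k + 1) : ℝ))
      (x ^ k / (Nat.factorial k : ℝ)) x := by
  refine ((hasDerivAt_pow (k + 1) x).div_const (Nat.factorial (k + 1) : ℝ)).congr_deriv ?_
  rw [Nat.factorial_succ, Nat.cast_mul, Nat.add_sub_cancel]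
  field_simp

lemma hasDerivAt_weightedExpSum (c : ℕ → ℝ) (n : ℕ) (x : ℝ) :
    HasDerivAt (weightedExpSum c (n + 1)) (weightedExpSum (fun k => c (k + 1)) n x) x := by
  have hsplit : weightedExpSum c (n + 1) = fun y =>
      ∑ k ∈ Finset.range n, y ^ (k + 1) / (Nat.factorial (k + 1) : ℝ) * c (k + 1) + c 0 := by
    funext y
    simp [weightedExpSum, Finset.sum_range_succ']
  rw [hsplit]
  exact (HasDerivAt.fun_sum fun k _ =>
    (hasDerivAt_pow_succ_div_factorial k x).mul_const (c (k + 1))).add_const (c 0)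

lemma weightedExpSum_sub_shift {c : ℕ → ℝ} {n : ℕ} (hc : c (n + 1) = 0) (x : ℝ) :
    weightedExpSum c (n + 1) x - weightedExpSum (fun k => c (k + 1)) n x =
      weightedExpSum (fun k => c k - c (k + 1)) (n + 1) x := by
  simp only [weightedExpSum, Finset.sum_range_succ, hc, mul_sub, Finset.sum_sub_distrib]
  ring

lemma weightedExpSum_congr {c d : ℕ → ℝ} {n : ℕ} (h : ∀ k < n, c k = d k) (x : ℝ) :
    weightedExpSum c n x = weightedExpSum d n x :=
  Finset.sum_congr rfl fun k hk => by rw [h k (Finset.mem_range.1 hk)]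

lemma const_le_weightedExpSum {c : ℕ → ℝ} {n : ℕ} {x : ℝ} (hx : 0 ≤ x)
    (hc : ∀ k, 1 ≤ k → k ≤ n → 0 ≤ c k) : c 0 ≤ weightedExpSum c (n + 1) x := by
  rw [weightedExpSum, Finset.sum_range_succ']
  have := Finset.sum_nonneg fun k (hk : k ∈ Finset.range n) =>
    mul_nonneg (by positivity : 0 ≤ x ^ (k + 1) / (Nat.factorial (k + 1) : ℝ))
      (hc (k + 1) (by omega) (Finset.mem_range.1 hk))
  simpa using this

lemma pow_le_one_add_pow {x : ℝ} (hx : 0 ≤ x) {k m : ℕ} (hkm : k ≤ m) : x ^ k ≤ 1 + x ^ m := by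
  rcases le_total x 1 with h | h
  · linarith [pow_le_one₀ hx h (n := k), pow_nonneg hx m]
  · linarith [pow_le_pow_right₀ h hkm]

lemma weightedExpSum_le_sum_mul {c : ℕ → ℝ} {n m : ℕ} {x : ℝ} (hx : 0 ≤ x) (hnm : n ≤ m + 1)
    (hc : ∀ k < n, 0 ≤ c k) :
    weightedExpSum c n x ≤ (∑ k ∈ Finset.range n, c k) * (1 + x ^ m) := by
  rw [weightedExpSum, Finset.sum_mul]
  refine Finset.sum_le_sum fun k hk => ?_
  have hk := Finset.mem_range.1 hk
  have hdiv : x ^ k / (Nat.factorial k : ℝ) ≤ x ^ k :=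
    div_le_self (by positivity) (by exact_mod_cast Nat.one_le_iff_ne_zero.2 k.factorial_ne_zero)
  rw [mul_comm]
  exact mul_le_mul_of_nonneg_left (hdiv.trans (pow_le_one_add_pow hx (by omega))) (hc k hk)

lemma tailS_sub_tailS_succ {Δ k : ℕ} (r : ℕ → ℝ) (hk : k ≤ Δ) :
    tailS Δ r k - tailS Δ r (k + 1) = r k := by
  rw [tailS, Finset.Icc_eq_cons_Ioc hk, Finset.sum_cons, ← Finset.Icc_add_one_left_eq_Ioc,
    tailS, add_sub_cancel_right]

lemma tailS_of_lt {Δ k : ℕ} (r : ℕ → ℝ) (hk : Δ < k) : tailS Δ r k = 0 := by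
  rw [tailS, Finset.Icc_eq_empty_of_lt hk, Finset.sum_empty]

section Itilde

variable {Δ : ℕ} {r : ℕ → ℝ}

lemma memR.tailS_two (hr : memR Δ r) (hΔ : 2 ≤ Δ) : tailS Δ r 2 = 0 := by
  have h := tailS_sub_tailS_succ r hΔ
  rw [hr.1, show tailS Δ r 3 = 1 from hr.2.2.2] at h
  linarith

lemma memR.neg_one_le_weightedExpSum (hr : memR Δ r) (hΔ : 2 ≤ Δ) {x : ℝ} (hx : 0 ≤ x) :
    -1 ≤ weightedExpSum (fun k => r (k + 2)) (Δ - 1) x := by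
  obtain ⟨n, rfl⟩ : ∃ n, Δ = n + 2 := ⟨Δ - 2, by omega⟩
  simpa [hr.1] using
    const_le_weightedExpSum (n := n) hx fun k hk1 hkn => hr.2.1 (k + 2) (by omega) (by omega)

lemma memR.weightedExpSum_le (hr : memR Δ r) {x : ℝ} (hx : 0 ≤ x) :
    weightedExpSum (fun k => r (k + 3)) (Δ - 2) x ≤ 1 + x ^ Δ := by
  have hsum : ∑ k ∈ Finset.range (Δ - 2), r (k + 3) = 1 := by
    rw [← hr.2.2.2, ← Finset.Ico_add_one_right_eq_Icc, Finset.sum_Ico_eq_sum_range,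
      show Δ + 1 - 3 = Δ - 2 by omega]
    simp only [add_comm]
  simpa [hsum] using weightedExpSum_le_sum_mul (n := Δ - 2) (m := Δ) hx (by omega)
    fun k hk => hr.2.1 (k + 3) (by omega) (by omega)

lemma Itilde_eq_weightedExpSum (hr : memR Δ r) (hΔ : 2 ≤ Δ) (ε : ℝ) :
    Itilde Δ r ε = fun x =>
      Real.exp (-x) * (1 + ε * weightedExpSum (fun k => tailS Δ r (k + 2)) (Δ - 1) x) := by
  funext x
  rw [Itilde, weightedExpSum, Nat.range_eq_Icc_zero_sub_one _ (by omega),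
    Finset.Icc_eq_cons_Ioc (Nat.zero_le _), Finset.sum_cons, ← Finset.Icc_add_one_left_eq_Ioc,
    show Δ - 1 - 1 = Δ - 2 by omega, hr.tailS_two hΔ]
  simp

lemma hasDerivAt_Itilde (hr : memR Δ r) (hΔ : 2 ≤ Δ) (ε x : ℝ) :
    HasDerivAt (Itilde Δ r ε)
      (-Real.exp (-x) * (1 + ε * weightedExpSum (fun k => r (k + 2)) (Δ - 1) x)) x := by
  rw [Itilde_eq_weightedExpSum hr hΔ]
  obtain ⟨n, rfl⟩ : ∃ n, Δ = n + 2 := ⟨Δ - 2, by omega⟩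
  have hF := hasDerivAt_weightedExpSum (fun k => tailS (n + 2) r (k + 2)) n x
  have hdiff : weightedExpSum (fun k => tailS (n + 2) r (k + 2)) (n + 1) x -
      weightedExpSum (fun k => tailS (n + 2) r (k + 1 + 2)) n x =
      weightedExpSum (fun k => r (k + 2)) (n + 1) x := by
    refine (weightedExpSum_sub_shift (c := fun k => tailS (n + 2) r (k + 2))
      (tailS_of_lt r (by omega)) x).trans ?_
    exact weightedExpSum_congr (fun k hk => tailS_sub_tailS_succ r (by omega)) x
  refine ((hasDerivAt_neg x).exp.mul ((hF.const_mul ε).const_add 1)).congr_deriv ?_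
  rw [show n + 2 - 1 = n + 1 by omega, ← hdiff]
  ring

lemma hasDerivAt_deriv_Itilde (hr : memR Δ r) (hΔ : 2 ≤ Δ) (ε x : ℝ) :
    HasDerivAt (deriv (Itilde Δ r ε))
      (Real.exp (-x) * (1 + ε * weightedExpSum (fun k => r (k + 2)) (Δ - 1) x
        - ε * weightedExpSum (fun k => r (k + 3)) (Δ - 2) x)) x := by
  rw [funext fun y => (hasDerivAt_Itilde hr hΔ ε y).deriv]
  obtain ⟨n, rfl⟩ : ∃ n, Δ = n + 2 := ⟨Δ - 2, by omega⟩
  have hG := hasDerivAt_weightedExpSum (fun k => r (k + 2)) n x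
  refine ((hasDerivAt_neg x).exp.neg.mul ((hG.const_mul ε).const_add 1)).congr_deriv ?_
  simp only [show n + 2 - 1 = n + 1 by omega, Nat.add_sub_cancel, Pi.neg_apply]
  ring

lemma deriv_Itilde_le (hr : memR Δ r) (hΔ : 2 ≤ Δ) {ε : ℝ} (hε : 0 ≤ ε) (hε' : ε ≤ 1 / 2)
    {x : ℝ} (hx : 0 ≤ x) : deriv (Itilde Δ r ε) x ≤ -(1 / 2) * Real.exp (-x) := by
  have hG : 1 / 2 ≤ 1 + ε * weightedExpSum (fun k => r (k + 2)) (Δ - 1) x := by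
    nlinarith [hr.neg_one_le_weightedExpSum hΔ hx]
  rw [(hasDerivAt_Itilde hr hΔ ε x).deriv, neg_mul, neg_mul, neg_le_neg_iff, mul_comm]
  exact mul_le_mul_of_nonneg_left hG (Real.exp_pos _).le

lemma convexOn_Itilde (hr : memR Δ r) (hΔ : 3 ≤ Δ) {ε : ℝ} (hε : 0 < ε) (hε' : ε ≤ 1 / 3) :
    ConvexOn ℝ (Set.Icc 0 ((1 / (2 * ε * (Δ : ℝ))) ^ ((Δ : ℝ)⁻¹))) (Itilde Δ r ε) := by
  have hderiv2 := hasDerivAt_deriv_Itilde hr (by omega) ε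
  have hdiff : Differentiable ℝ (Itilde Δ r ε) :=
    fun x => (hasDerivAt_Itilde hr (by omega) ε x).differentiableAt
  refine convexOn_of_deriv2_nonneg (convex_Icc _ _) hdiff.continuous.continuousOn
    hdiff.differentiableOn (fun x _ => (hderiv2 x).differentiableAt.differentiableWithinAt)
    fun x hx => ?_
  obtain ⟨hx0, hxM⟩ := interior_subset hx
  rw [Real.le_rpow_inv_iff_of_pos hx0 (by positivity) (by positivity), Real.rpow_natCast,
    le_div_iff₀ (by positivity), mul_comm] at hxM
  have hΔ' : (3 : ℝ) ≤ Δ := by exact_mod_cast hΔ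
  rw [Function.iterate_succ_apply', Function.iterate_one, (hderiv2 x).deriv]
  refine mul_nonneg (Real.exp_pos _).le ?_
  have hG := mul_le_mul_of_nonneg_left (hr.neg_one_le_weightedExpSum (by omega) hx0) hε.le
  have hG' := mul_le_mul_of_nonneg_left (hr.weightedExpSum_le hx0) hε.le
  nlinarith [pow_nonneg hx0 Δ]

end Itilde

/-- Properties of `Ĩ_p`: strictly decreasing on `[0,∞)`, derivative at most `-e^{-x}/2`,
and convex on `[0, (1/(2εΔ))^{1/Δ}]`, for all small enough `ε`. -/
theorem Itilde_properties (Δ : ℕ) (hΔ : 3 ≤ Δ) :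
    ∃ ε₀ : ℝ, 0 < ε₀ ∧ ∀ ε : ℝ, 0 < ε → ε < ε₀ → ∀ r : ℕ → ℝ, memR Δ r →
      StrictAntiOn (Itilde Δ r ε) (Set.Ici 0) ∧
      (∀ x : ℝ, 0 ≤ x → deriv (Itilde Δ r ε) x ≤ -(1 / 2) * Real.exp (-x)) ∧
      ConvexOn ℝ (Set.Icc 0 ((1 / (2 * ε * (Δ : ℝ))) ^ ((Δ : ℝ)⁻¹))) (Itilde Δ r ε) := by
  refine ⟨1 / 3, by norm_num, fun ε hε hε₀ r hr => ?_⟩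
  have hbound (x : ℝ) (hx : 0 ≤ x) := deriv_Itilde_le hr (by omega) hε.le (by linarith) hx
  have hcont : Continuous (Itilde Δ r ε) :=
    continuous_iff_continuousAt.2 fun x => (hasDerivAt_Itilde hr (by omega) ε x).continuousAt
  refine ⟨strictAntiOn_of_deriv_neg (convex_Ici 0) hcont.continuousOn fun x hx => ?_, hbound,
    convexOn_Itilde hr hΔ hε hε₀.le⟩
  exact (hbound x (interior_subset hx)).trans_lt (by nlinarith [Real.exp_pos (-x)])
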